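/- For every even integer n ≥ 6 there exist Boolean bent functions f, f' : 𝔽₂ⁿ → 𝔽₂ which are not extended-affine equivalent, but whose translation designs dev(G_f) and dev(G_{f'}) are isomorphic, i.e. there exist bijections Π, Σ : 𝔽₂ⁿ × 𝔽₂ → 𝔽₂ⁿ × 𝔽₂ such that for all p = (x,u), q = (y,v), writing Π(p) = (x',u') and Σ(q) = (y',v'), one has f(x' ⊕ y') = u' ⊕ v' if and only if f'(x ⊕ y) = u ⊕ v. -/

import Mathlib

open Finset Function

/-- The vector space `𝔽₂ⁿ`. -/
abbrev BV (n : ℕ) := Fin n → ZMod 2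

/-- The standard dot product `⟨u,v⟩ = Σᵢ uᵢ vᵢ` on `𝔽₂ⁿ`. -/
def bdot {n : ℕ} (u v : BV n) : ZMod 2 := ∑ i, u i * v i

/-- The Walsh coefficient `W_f(a) = Σ_x (−1)^{f(x) ⊕ ⟨a,x⟩}` of a Boolean function. -/
def walshB {n : ℕ} (f : BV n → ZMod 2) (a : BV n) : ℤ :=
  ∑ x : BV n, (-1 : ℤ) ^ ((f x + bdot a x).val)

/-- A Boolean function on `𝔽₂ⁿ` is bent if all its Walsh coefficients equal `±2^{n/2}`. -/
def IsBentB {n : ℕ} (f : BV n → ZMod 2) : Prop :=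
  ∀ a : BV n, walshB f a = 2 ^ (n / 2) ∨ walshB f a = -2 ^ (n / 2)

/-- A map `𝔽₂ⁿ → 𝔽₂ⁿ` is affine if it is a linear map followed by a translation. -/
def IsAffineF {n : ℕ} (A : BV n → BV n) : Prop :=
  ∃ (L : BV n →ₗ[ZMod 2] BV n) (t : BV n), ∀ x, A x = L x + t

/-- A map `𝔽₂ⁿ → 𝔽₂` is affine if it is a linear form plus a constant. -/
def IsAffineB {n : ℕ} (A : BV n → ZMod 2) : Prop :=
  ∃ (L : BV n →ₗ[ZMod 2] ZMod 2) (c : ZMod 2), ∀ x, A x = L x + c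

/-- Extended-affine equivalence of Boolean functions: `f = f' ∘ A₂ + A₃` with `A₂` an
affine automorphism of `𝔽₂ⁿ` and `A₃` affine (the only linear automorphism `A₁` of `𝔽₂`
is the identity). -/
def EAequivB {n : ℕ} (f f' : BV n → ZMod 2) : Prop :=
  ∃ (A₂ : BV n → BV n) (A₃ : BV n → ZMod 2),
    IsAffineF A₂ ∧ Bijective A₂ ∧ IsAffineB A₃ ∧
    ∀ x, f x = f' (A₂ x) + A₃ x

/-!
Take `f = f₀ ⊕ q` and `f' = q₆ ⊕ q`, where `q` is a quadratic bent function in `n - 6`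
variables, `q₆(x, y) = x · y` on `𝔽₂³ × 𝔽₂³` and `f₀ = q₆ + x₀x₁x₂`. Both are bent, since the
Walsh transform of a direct sum is the product of the Walsh transforms. EA-equivalence preserves
the vanishing of all third derivatives (algebraic degree `≤ 2`), which holds for `f'` but not for
the cubic `f`. Yet the involution `λ(x, y) = (x, y + (x₁x₂, x₀x₂, x₀x₁))` of `𝔽₂⁶` satisfies
`f₀(λu + λv) = q₆(u + v) + s(u) + s(v)` for some `s`, so `(x, u) ↦ (λx, u + s(x))` is an
isomorphism of the translation designs.
-/

section ThirdDeriv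

variable {G H : Type*} [AddCommGroup G] [AddCommGroup H]

def thirdDeriv (f : G → ZMod 2) (a b c x : G) : ZMod 2 :=
  f x + f (x + a) + f (x + b) + f (x + c) + f (x + a + b) + f (x + a + c) +
    f (x + b + c) + f (x + a + b + c)

def HasDegreeLeTwo (f : G → ZMod 2) : Prop :=
  ∀ a b c x, thirdDeriv f a b c x = 0

theorem thirdDeriv_add (f g : G → ZMod 2) (a b c x : G) :
    thirdDeriv (fun z => f z + g z) a b c x = thirdDeriv f a b c x + thirdDeriv g a b c x := by
  simp only [thirdDeriv]
  ring

theorem thirdDeriv_zero (f : G → ZMod 2) (x : G) : thirdDeriv f 0 0 0 x = 0 := by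
  simp only [thirdDeriv, add_zero]
  ring_nf
  reduce_mod_char

theorem HasDegreeLeTwo.add {f g : G → ZMod 2} (hf : HasDegreeLeTwo f) (hg : HasDegreeLeTwo g) :
    HasDegreeLeTwo fun z => f z + g z := fun a b c x => by
  rw [thirdDeriv_add, hf, hg, add_zero]

theorem hasDegreeLeTwo_const (c : ZMod 2) : HasDegreeLeTwo fun _ : G => c := fun _ _ _ _ => by
  simp only [thirdDeriv]
  ring_nf
  reduce_mod_char

theorem hasDegreeLeTwo_addMonoidHom (ℓ : G →+ ZMod 2) : HasDegreeLeTwo ℓ := fun _ _ _ _ => by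
  simp only [thirdDeriv, map_add]
  ring_nf
  reduce_mod_char

theorem hasDegreeLeTwo_mul (ℓ₁ ℓ₂ : G →+ ZMod 2) : HasDegreeLeTwo fun x => ℓ₁ x * ℓ₂ x :=
  fun _ _ _ _ => by
    simp only [thirdDeriv, map_add]
    ring_nf
    reduce_mod_char

theorem HasDegreeLeTwo.comp_add_const {f : H → ZMod 2} (hf : HasDegreeLeTwo f) (L : G →+ H)
    (t : H) : HasDegreeLeTwo fun x => f (L x + t) := fun a b c x => by
  have hcomp : thirdDeriv (fun z => f (L z + t)) a b c x =
      thirdDeriv f (L a) (L b) (L c) (L x + t) := by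
    simp only [thirdDeriv, map_add, add_right_comm _ t]
  rw [hcomp, hf]

end ThirdDeriv

theorem hasDegreeLeTwo_coord_mul {n : ℕ} (i j : Fin n) : HasDegreeLeTwo fun x : BV n => x i * x j :=
  hasDegreeLeTwo_mul (Pi.evalAddMonoidHom (fun _ => ZMod 2) i) (Pi.evalAddMonoidHom _ j)

theorem HasDegreeLeTwo.of_eaEquivB {n : ℕ} {f f' : BV n → ZMod 2} (h : EAequivB f f')
    (hf' : HasDegreeLeTwo f') : HasDegreeLeTwo f := by
  obtain ⟨A₂, A₃, ⟨L, t, hA₂⟩, -, ⟨ℓ, c, hA₃⟩, hf⟩ := h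
  have hf_eq : f = fun x => f' (L x + t) + (ℓ x + c) := funext fun x => by rw [hf, hA₂, hA₃]
  rw [hf_eq]
  exact (hf'.comp_add_const L.toAddMonoidHom t).add
    ((hasDegreeLeTwo_addMonoidHom ℓ.toAddMonoidHom).add (hasDegreeLeTwo_const c))

section DirectSum

variable {p m : ℕ}

def splitAddEquiv (p m : ℕ) : BV (p + m) ≃+ BV p × BV m :=
  { (Fin.appendEquiv p m).symm with map_add' := fun _ _ => rfl }

def directSumB (g : BV p → ZMod 2) (h : BV m → ZMod 2) : BV (p + m) → ZMod 2 :=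
  fun z => g (splitAddEquiv p m z).1 + h (splitAddEquiv p m z).2

theorem bdot_split (a z : BV (p + m)) :
    bdot a z = bdot (splitAddEquiv p m a).1 (splitAddEquiv p m z).1 +
      bdot (splitAddEquiv p m a).2 (splitAddEquiv p m z).2 :=
  Fin.sum_univ_add _

theorem neg_one_pow_val_add : ∀ c d : ZMod 2,
    (-1 : ℤ) ^ (c + d).val = (-1 : ℤ) ^ c.val * (-1 : ℤ) ^ d.val := by
  decide

theorem walshB_directSumB (g : BV p → ZMod 2) (h : BV m → ZMod 2) (a : BV (p + m)) :
    walshB (directSumB g h) a =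
      walshB g (splitAddEquiv p m a).1 * walshB h (splitAddEquiv p m a).2 := by
  rw [walshB, walshB, walshB, Finset.sum_mul_sum, ← Fintype.sum_prod_type']
  refine Fintype.sum_equiv (splitAddEquiv p m).toEquiv _ _ fun z => ?_
  rw [directSumB, bdot_split, add_add_add_comm, neg_one_pow_val_add]
  rfl

theorem IsBentB.directSum {g : BV p → ZMod 2} {h : BV m → ZMod 2} (hp : Even p) (hm : Even m)
    (hg : IsBentB g) (hh : IsBentB h) : IsBentB (directSumB g h) := by
  intro a
  have hhalf : (p + m) / 2 = p / 2 + m / 2 := by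
    obtain ⟨u, rfl⟩ := hp
    obtain ⟨v, rfl⟩ := hm
    omega
  rw [walshB_directSumB, hhalf, pow_add]
  rcases hg (splitAddEquiv p m a).1 with h₁ | h₁ <;>
    rcases hh (splitAddEquiv p m a).2 with h₂ | h₂ <;>
    simp [h₁, h₂]

theorem thirdDeriv_directSumB (g : BV p → ZMod 2) (h : BV m → ZMod 2) (a b c x : BV (p + m)) :
    thirdDeriv (directSumB g h) a b c x =
      thirdDeriv g (splitAddEquiv p m a).1 (splitAddEquiv p m b).1 (splitAddEquiv p m c).1
          (splitAddEquiv p m x).1 +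
        thirdDeriv h (splitAddEquiv p m a).2 (splitAddEquiv p m b).2 (splitAddEquiv p m c).2
          (splitAddEquiv p m x).2 := by
  simp only [thirdDeriv, directSumB, map_add, Prod.fst_add, Prod.snd_add]
  ring

theorem HasDegreeLeTwo.directSum {g : BV p → ZMod 2} {h : BV m → ZMod 2}
    (hg : HasDegreeLeTwo g) (hh : HasDegreeLeTwo h) : HasDegreeLeTwo (directSumB g h) :=
  fun a b c x => by rw [thirdDeriv_directSumB, hg, hh, add_zero]

theorem HasDegreeLeTwo.of_directSum_left {g : BV p → ZMod 2} {h : BV m → ZMod 2}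
    (H : HasDegreeLeTwo (directSumB g h)) : HasDegreeLeTwo g := fun a b c x => by
  have hzero := H ((splitAddEquiv p m).symm (a, 0)) ((splitAddEquiv p m).symm (b, 0))
    ((splitAddEquiv p m).symm (c, 0)) ((splitAddEquiv p m).symm (x, 0))
  simpa only [thirdDeriv_directSumB, AddEquiv.apply_symm_apply, thirdDeriv_zero, add_zero]
    using hzero

end DirectSum

def quadBent2 : BV 2 → ZMod 2 := fun x => x 0 * x 1

theorem quadBent2_isBentB : IsBentB quadBent2 := by
  unfold IsBentB
  decide

theorem exists_bent_hasDegreeLeTwo (k : ℕ) :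
    ∃ q : BV (2 * k) → ZMod 2, IsBentB q ∧ HasDegreeLeTwo q := by
  induction k with
  | zero => exact ⟨fun _ => 0, by unfold IsBentB; decide, hasDegreeLeTwo_const 0⟩
  | succ k ih =>
    obtain ⟨q, hq_bent, hq_deg⟩ := ih
    exact ⟨directSumB q quadBent2, hq_bent.directSum (even_two_mul k) even_two quadBent2_isBentB,
      hq_deg.directSum (hasDegreeLeTwo_coord_mul 0 1)⟩

section DesignIsomorphism

variable {G B : Type*} [AddCommGroup G] [AddCommGroup B]

def IsTwist (f f' : G → B) : Prop :=
  ∃ (φ : G ≃ G) (s : G → B), ∀ u v, f (φ u + φ v) = f' (u + v) + s u + s v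

theorem IsTwist.exists_design_iso {f f' : G → B} (h : IsTwist f f') :
    ∃ P S : G × B → G × B, Bijective P ∧ Bijective S ∧
      ∀ p q : G × B,
        (f ((P p).1 + (S q).1) = (P p).2 + (S q).2) ↔ (f' (p.1 + q.1) = p.2 + q.2) := by
  obtain ⟨φ, s, hφ⟩ := h
  let P := Equiv.prodShear φ fun x => Equiv.addRight (s x)
  refine ⟨P, P, P.bijective, P.bijective, fun ⟨x, u⟩ ⟨y, v⟩ => ?_⟩
  show f (φ x + φ y) = u + s x + (v + s y) ↔ _
  rw [hφ, show u + s x + (v + s y) = u + v + s x + s y by abel, add_left_inj, add_left_inj]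

end DesignIsomorphism

theorem IsTwist.directSum {p m : ℕ} {g g' : BV p → ZMod 2} (h : BV m → ZMod 2)
    (hg : IsTwist g g') : IsTwist (directSumB g h) (directSumB g' h) := by
  obtain ⟨φ, s, hφ⟩ := hg
  let ψ := (splitAddEquiv p m).toEquiv.trans
    ((φ.prodCongr (Equiv.refl _)).trans (splitAddEquiv p m).symm.toEquiv)
  have hψ : ∀ z, splitAddEquiv p m (ψ z) = (φ (splitAddEquiv p m z).1, (splitAddEquiv p m z).2) :=
    fun z => (splitAddEquiv p m).apply_symm_apply _
  refine ⟨ψ, fun z => s (splitAddEquiv p m z).1, fun u v => ?_⟩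
  simp only [directSumB, map_add, hψ, Prod.fst_add, Prod.snd_add, hφ]
  ring

def cubicBent6 : BV 6 → ZMod 2 := fun x => x 0 * x 1 * x 2 + x 0 * x 3 + x 1 * x 4 + x 2 * x 5

def quadBent6 : BV 6 → ZMod 2 := fun x => x 0 * x 3 + x 1 * x 4 + x 2 * x 5

def shear6 : BV 6 → BV 6 := fun x =>
  ![x 0, x 1, x 2, x 3 + x 1 * x 2, x 4 + x 0 * x 2, x 5 + x 0 * x 1]

set_option maxRecDepth 20000 in
theorem cubicBent6_isBentB : IsBentB cubicBent6 := by
  unfold IsBentB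
  decide

set_option maxRecDepth 20000 in
theorem quadBent6_isBentB : IsBentB quadBent6 := by
  unfold IsBentB
  decide

theorem quadBent6_hasDegreeLeTwo : HasDegreeLeTwo quadBent6 :=
  ((hasDegreeLeTwo_coord_mul 0 3).add (hasDegreeLeTwo_coord_mul 1 4)).add
    (hasDegreeLeTwo_coord_mul 2 5)

theorem not_hasDegreeLeTwo_cubicBent6 : ¬HasDegreeLeTwo cubicBent6 := fun h =>
  absurd (h ![1, 0, 0, 0, 0, 0] ![0, 1, 0, 0, 0, 0] ![0, 0, 1, 0, 0, 0] 0) (by decide)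

theorem shear6_involutive : Involutive shear6 := by
  unfold Involutive
  decide

set_option maxRecDepth 20000 in
theorem isTwist_cubicBent6_quadBent6 : IsTwist cubicBent6 quadBent6 := by
  -- `s` is read off from the case `v = 0`
  refine ⟨shear6_involutive.toPerm, fun x => cubicBent6 (shear6 x) + quadBent6 x, ?_⟩
  show ∀ u v, cubicBent6 (shear6 u + shear6 v) =
    quadBent6 (u + v) + (cubicBent6 (shear6 u) + quadBent6 u) +
      (cubicBent6 (shear6 v) + quadBent6 v)
  decide

/-- For every even `n ≥ 6` there exist Boolean bent functions on `𝔽₂ⁿ` which are not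
extended-affine equivalent but whose translation designs `dev(G_f)` and `dev(G_{f'})`
are isomorphic. -/
theorem exists_inequivalent_isomorphic_boolean_bent
    (n : ℕ) (hn : 6 ≤ n) (hev : Even n) :
    ∃ f f' : BV n → ZMod 2, IsBentB f ∧ IsBentB f' ∧ ¬ EAequivB f f' ∧
      ∃ P S : BV n × ZMod 2 → BV n × ZMod 2, Bijective P ∧ Bijective S ∧
        ∀ p q : BV n × ZMod 2,
          (f ((P p).1 + (S q).1) = (P p).2 + (S q).2) ↔
            (f' (p.1 + q.1) = p.2 + q.2) := by
  obtain ⟨m, rfl⟩ := Nat.exists_eq_add_of_le hn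
  obtain ⟨k, rfl⟩ : 2 ∣ m := even_iff_two_dvd.mp ((Nat.even_add.mp hev).mp (by decide))
  obtain ⟨q, hq_bent, hq_deg⟩ := exists_bent_hasDegreeLeTwo k
  refine ⟨directSumB cubicBent6 q, directSumB quadBent6 q,
    cubicBent6_isBentB.directSum (by decide) (even_two_mul k) hq_bent,
    quadBent6_isBentB.directSum (by decide) (even_two_mul k) hq_bent, fun hEA => ?_,
    (isTwist_cubicBent6_quadBent6.directSum q).exists_design_iso⟩
  exact not_hasDegreeLeTwo_cubicBent6
    ((quadBent6_hasDegreeLeTwo.directSum hq_deg).of_eaEquivB hEA).of_directSum_left
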